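/- Let Z be an isotropic measure on S^{n-1} with centroid at the origin, Z̄ the lifted isotropic measure on S^n, φ : R → (0,∞) the increasing transport map with ∫_0^{φ(t)} e^{−s} ds = (1/√π)∫_{−∞}^t e^{−s^2} ds, and T : R^{n+1} → R^{n+1} defined by Ty = ∫_{S^n} w φ(y·w) dZ̄(w). Then T(R^{n+1}) is contained in the open cone C = ∪_{r>0} (−r√n int(Z_∞)) × {r}. -/

import Mathlib

/-!
Up to the factor `(n+1)/n`, the first block of coordinates of `T y` is
`-(√n / √(n+1)) • ∫ ψ u • u dZ` and the last one is `(∫ ψ dZ) / √(n+1) > 0`, where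
`ψ u = φ (y · s u) > 0`; so `T y` lies in the cone as soon as the `ψ`-weighted barycenter of
`Z` lies in `int Z_∞`. If it did not, a supporting functional `f ≠ 0` at the barycenter `b`
would satisfy `f u ≤ f b` on `supp Z` while `∫ ψ (f b - f) dZ = 0`, forcing `f = f b` on
`supp Z`. For an isotropic measure with centroid `0` no nonzero functional is constant on the
support: the constant is `0` by the centroid condition, and then isotropy gives `‖f‖ = 0`.
The same fact puts `supp Z` in no affine hyperplane, so `int Z_∞` is nonempty and the
supporting functional exists.
-/

open MeasureTheory Set
open scoped Pointwise

/-- The support of a measure on `ℝ^n`. -/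
def msupp {n : ℕ} (Z : Measure (EuclideanSpace ℝ (Fin n))) :
    Set (EuclideanSpace ℝ (Fin n)) :=
  {x | ∀ r > (0 : ℝ), Z (Metric.ball x r) ≠ 0}

namespace MeasureTheory

lemma integral_pos_of_forall_pos {α : Type*} [MeasurableSpace α] {μ : Measure α} (hμ : μ ≠ 0)
    {f : α → ℝ} (hf : Integrable f μ) (hpos : ∀ x, 0 < f x) : 0 < ∫ x, f x ∂μ := by
  rw [integral_pos_iff_support_of_nonneg (fun x ↦ (hpos x).le) hf,
    Function.support_eq_univ fun x ↦ (hpos x).ne']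
  exact Measure.measure_univ_pos.mpr hμ

variable {X : Type*} [TopologicalSpace X] [MeasurableSpace X]

lemma _root_.Continuous.integrable_of_ae_mem_isCompact [OpensMeasurableSpace X] [T2Space X]
    {F : Type*} [NormedAddCommGroup F] {μ : Measure X} [IsFiniteMeasure μ] {K : Set X}
    (hK : IsCompact K) (hμK : ∀ᵐ x ∂μ, x ∈ K) {g : X → F} (hg : Continuous g) :
    Integrable g μ := by
  rw [← Measure.restrict_eq_self_of_ae_mem hμK]
  exact hg.continuousOn.integrableOn_compact hK

lemma Measure.eq_zero_on_support_of_integral_eq_zero [HereditarilyLindelofSpace X]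
    {μ : Measure X} {g : X → ℝ} (hg : Continuous g) (hgi : Integrable g μ)
    (hnonneg : ∀ x ∈ μ.support, 0 ≤ g x) (h0 : ∫ x, g x ∂μ = 0) :
    ∀ x ∈ μ.support, g x = 0 := by
  have hae : g =ᵐ[μ] 0 :=
    (integral_eq_zero_iff_of_nonneg_ae
      (Filter.mem_of_superset Measure.support_mem_ae hnonneg) hgi).1 h0
  intro x hx
  by_contra hgx
  have hU : {y | g y ≠ 0} ∈ nhds x :=
    (isOpen_compl_singleton.preimage hg).mem_nhds hgx
  exact ((Measure.mem_support_iff_forall x).1 hx _ hU).ne' (ae_iff.1 hae)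

end MeasureTheory

section ConvexHull

lemma interior_convexHull_nonempty_of_forall_dual_const_eq_zero {E : Type*}
    [NormedAddCommGroup E] [NormedSpace ℝ E] [FiniteDimensional ℝ E] {S : Set E}
    (hS : S.Nonempty) (hconst : ∀ (f : E →L[ℝ] ℝ) (c : ℝ), (∀ u ∈ S, f u = c) → f = 0) :
    (interior (convexHull ℝ S)).Nonempty := by
  rw [(convex_convexHull ℝ S).interior_nonempty_iff_affineSpan_eq_top, affineSpan_convexHull,
    AffineSubspace.affineSpan_eq_top_iff_vectorSpan_eq_top_of_nonempty ℝ E E hS]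
  by_contra htop
  obtain ⟨f, hf0, hker⟩ := Submodule.exists_le_ker_of_lt_top _ (lt_top_iff_ne_top.2 htop)
  obtain ⟨p, hp⟩ := hS
  refine hf0 (congrArg ContinuousLinearMap.toLinearMap
    (hconst (LinearMap.toContinuousLinearMap f) (f p) fun u hu ↦ ?_))
  have hup : f (u - p) = 0 := hker (vsub_mem_vectorSpan ℝ hu hp)
  simpa [sub_eq_zero] using hup

variable {E : Type*} [TopologicalSpace E] [AddCommGroup E] [Module ℝ E]
  [IsTopologicalAddGroup E] [ContinuousSMul ℝ E]

lemma exists_dual_le_of_notMem_interior_convexHull {S : Set E} {b : E}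
    (hS : (interior (convexHull ℝ S)).Nonempty) (hb : b ∉ interior (convexHull ℝ S)) :
    ∃ f : E →L[ℝ] ℝ, f ≠ 0 ∧ ∀ u ∈ S, f u ≤ f b := by
  obtain ⟨f, hf⟩ := geometric_hahn_banach_open_point (convex_convexHull ℝ S).interior
    isOpen_interior hb
  refine ⟨f, fun h ↦ by simpa [h] using hf _ hS.some_mem, fun u hu ↦ ?_⟩
  have hcl : u ∈ closure (interior (convexHull ℝ S)) := by
    rw [(convex_convexHull ℝ S).closure_interior_eq_closure_of_nonempty_interior hS]
    exact subset_closure (subset_convexHull ℝ S hu)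
  exact closure_lt_subset_le f.continuous continuous_const (closure_mono hf hcl)

end ConvexHull

section Barycenter

variable {E : Type*} [NormedAddCommGroup E] [NormedSpace ℝ E] [FiniteDimensional ℝ E]
  [MeasurableSpace E] {μ : Measure E}

lemma weighted_barycenter_mem_interior_convexHull_support (hμ : μ ≠ 0)
    (hconst : ∀ (f : E →L[ℝ] ℝ) (c : ℝ), (∀ u ∈ μ.support, f u = c) → f = 0)
    {ψ : E → ℝ} (hψ : Continuous ψ) (hψpos : ∀ u, 0 < ψ u) (hψi : Integrable ψ μ)
    (hψui : Integrable (fun u ↦ ψ u • u) μ) :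
    (∫ u, ψ u ∂μ)⁻¹ • ∫ u, ψ u • u ∂μ ∈ interior (convexHull ℝ μ.support) := by
  set I := ∫ u, ψ u ∂μ
  set b := I⁻¹ • ∫ u, ψ u • u ∂μ
  have hI : 0 < I := integral_pos_of_forall_pos hμ hψi hψpos
  have hint := interior_convexHull_nonempty_of_forall_dual_const_eq_zero
    (Measure.nonempty_support hμ) hconst
  by_contra hb
  obtain ⟨f, hf0, hfb⟩ := exists_dual_le_of_notMem_interior_convexHull hint hb
  have hg : ∀ u, ψ u * (f b - f u) = ψ u * f b - f (ψ u • u) := fun u ↦ by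
    rw [mul_sub, map_smul f (ψ u) u, smul_eq_mul]
  have hgi : Integrable (fun u ↦ ψ u * (f b - f u)) μ := by
    simp_rw [hg]
    exact (hψi.mul_const _).sub (f.integrable_comp hψui)
  have hzero : ∫ u, ψ u * (f b - f u) ∂μ = 0 := by
    simp_rw [hg]
    rw [integral_sub (hψi.mul_const _) (f.integrable_comp hψui), integral_mul_const,
      f.integral_comp_comm hψui, map_smul, smul_eq_mul, ← mul_assoc, mul_inv_cancel₀ hI.ne',
      one_mul, sub_self]
  have hvanish := Measure.eq_zero_on_support_of_integral_eq_zero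
    (hψ.mul (continuous_const.sub f.continuous)) hgi
    (fun u hu ↦ mul_nonneg (hψpos u).le (sub_nonneg.2 (hfb u hu))) hzero
  exact hf0 (hconst f (f b) fun u hu ↦
    (sub_eq_zero.1 ((mul_eq_zero.1 (hvanish u hu)).resolve_left (hψpos u).ne')).symm)

end Barycenter

section Isotropic

variable {E : Type*} [NormedAddCommGroup E] [InnerProductSpace ℝ E] [MeasurableSpace E]
  {μ : Measure E}
  (hiso : ∀ x : E, ∫ u, (inner ℝ x u : ℝ) ^ 2 ∂μ = ‖x‖ ^ 2)
include hiso

lemma ne_zero_of_isotropic [Nontrivial E] : μ ≠ 0 := by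
  rintro rfl
  obtain ⟨x, hx⟩ := exists_ne (0 : E)
  simpa [hx, eq_comm (a := (0 : ℝ))] using hiso x

lemma dual_eq_zero_of_isotropic_of_const_on_support [CompleteSpace E]
    [HereditarilyLindelofSpace E]
    (hid : Integrable (fun u ↦ u) μ) (hcent : ∫ u, u ∂μ = 0)
    (f : E →L[ℝ] ℝ) (c : ℝ) (hc : ∀ u ∈ μ.support, f u = c) : f = 0 := by
  set x := (InnerProductSpace.toDual ℝ E).symm f
  have hx : ∀ u, inner ℝ x u = f u := fun u ↦ InnerProductSpace.toDual_symm_apply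
  have hae : ∀ᵐ u ∂μ, inner ℝ x u = c :=
    Filter.mem_of_superset Measure.support_mem_ae fun u hu ↦ (hx u).trans (hc u hu)
  have hmean : μ.real univ * c = 0 := by
    rw [← smul_eq_mul, ← integral_const, ← integral_congr_ae hae, integral_inner hid, hcent,
      inner_zero_right]
  have hnorm : ‖x‖ ^ 2 = 0 := by
    rw [← hiso x, integral_congr_ae (hae.mono fun u hu ↦ congrArg (· ^ 2) hu), integral_const,
      smul_eq_mul]
    linear_combination c * hmean
  simpa [x] using hnorm

end Isotropic

lemma msupp_eq_support {n : ℕ} (Z : Measure (EuclideanSpace ℝ (Fin n))) :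
    msupp Z = Z.support := by
  ext x
  simp [msupp, Metric.nhds_basis_ball.mem_measureSupport, pos_iff_ne_zero]

theorem range_T_subset_cone_general (n : ℕ) (hn : 0 < n)
    (Z : Measure (EuclideanSpace ℝ (Fin n))) [IsFiniteMeasure Z]
    (hsph : Z (Metric.sphere (0 : EuclideanSpace ℝ (Fin n)) 1)ᶜ = 0)
    (hiso : ∀ x : EuclideanSpace ℝ (Fin n),
      ∫ u, (inner ℝ x u : ℝ) ^ 2 ∂Z = ‖x‖ ^ 2)
    (hcent : ∫ u, u ∂Z = (0 : EuclideanSpace ℝ (Fin n)))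
    (s : EuclideanSpace ℝ (Fin n) → EuclideanSpace ℝ (Fin n) × ℝ)
    (hs : ∀ u, s u = (-(Real.sqrt n / Real.sqrt (n + 1)) • u, 1 / Real.sqrt (n + 1)))
    (φ : ℝ → ℝ) (hφpos : ∀ t, 0 < φ t) (hφc : Continuous φ)
    (T : EuclideanSpace ℝ (Fin n) × ℝ → EuclideanSpace ℝ (Fin n) × ℝ)
    (hT : ∀ y, T y = (((n : ℝ) + 1) / n) •
      ∫ u, φ ((inner ℝ y.1 (s u).1 : ℝ) + y.2 * (s u).2) • s u ∂Z)
    (C : Set (EuclideanSpace ℝ (Fin n) × ℝ))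
    (hC : C = {z | 0 < z.2 ∧
      z.1 ∈ (-(z.2 * Real.sqrt n)) • interior (convexHull ℝ (msupp Z))}) :
    ∀ y, T y ∈ C := by
  intro y
  have : NeZero n := ⟨hn.ne'⟩
  set a := Real.sqrt n / Real.sqrt (n + 1)
  set ψ := fun u ↦ φ (inner ℝ y.1 (-a • u) + y.2 * (1 / Real.sqrt (n + 1)))
  have hψ : Continuous ψ := by fun_prop
  have hZK : ∀ᵐ u ∂Z, u ∈ Metric.sphere 0 1 := ae_iff.2 hsph
  have hψi := hψ.integrable_of_ae_mem_isCompact (isCompact_sphere 0 1) hZK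
  have hψui : Integrable (fun u ↦ ψ u • u) Z :=
    (hψ.smul continuous_id).integrable_of_ae_mem_isCompact (isCompact_sphere 0 1) hZK
  have hZ : Z ≠ 0 := ne_zero_of_isotropic hiso
  have hb := weighted_barycenter_mem_interior_convexHull_support hZ
    (dual_eq_zero_of_isotropic_of_const_on_support hiso
      (continuous_id.integrable_of_ae_mem_isCompact (isCompact_sphere 0 1) hZK) hcent)
    hψ (fun u ↦ hφpos _) hψi hψui
  have hTy : T y = ((n + 1) / n : ℝ) •
      (-a • ∫ u, ψ u • u ∂Z, (∫ u, ψ u ∂Z) * (1 / Real.sqrt (n + 1))) := by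
    rw [hT y]
    congr 1
    rw [← integral_smul, ← integral_mul_const,
      ← integral_pair (f := fun u ↦ -a • ψ u • u) (hψui.smul (-a)) (hψi.mul_const _)]
    congr 1
    funext u
    rw [hs u, Prod.smul_mk, smul_eq_mul, smul_comm]
  have hI := integral_pos_of_forall_pos hZ hψi fun u ↦ hφpos _
  have hn' : (0 : ℝ) < n := Nat.cast_pos.2 hn
  subst hC
  rw [msupp_eq_support]
  refine ⟨by rw [hTy]; simp only [Prod.smul_snd, smul_eq_mul]; positivity, ?_⟩
  convert smul_mem_smul_set (a := -((T y).2 * Real.sqrt n)) hb using 1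
  rw [hTy]
  simp only [Prod.smul_fst, Prod.smul_snd, smul_smul, smul_eq_mul, a]
  congr 1
  field_simp

/-- With `Z` isotropic on `S^{n-1}` with centroid at the origin, `Z̄` the
lifted measure on `S^n` (so `Ty = ∫ w φ(y·w) dZ̄(w) = ((n+1)/n) ∫ s(u) φ(y·s(u)) dZ(u)`),
and `φ : ℝ → (0,∞)` the monotone transport map from the Gaussian to the exponential
distribution, the image `T(ℝ^{n+1})` lies in the open cone
`C = ∪_{r>0} (−r√n int Z_∞) × {r}`. -/
theorem range_T_subset_cone (n : ℕ) (hn : 0 < n)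
    (Z : Measure (EuclideanSpace ℝ (Fin n))) [IsFiniteMeasure Z]
    (hsph : Z (Metric.sphere (0 : EuclideanSpace ℝ (Fin n)) 1)ᶜ = 0)
    (hiso : ∀ x : EuclideanSpace ℝ (Fin n),
      ∫ u, (inner ℝ x u : ℝ) ^ 2 ∂Z = ‖x‖ ^ 2)
    (hcent : ∫ u, u ∂Z = (0 : EuclideanSpace ℝ (Fin n)))
    (s : EuclideanSpace ℝ (Fin n) → EuclideanSpace ℝ (Fin n) × ℝ)
    (hs : ∀ u, s u = (-(Real.sqrt n / Real.sqrt (n + 1)) • u, 1 / Real.sqrt (n + 1)))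
    (φ : ℝ → ℝ) (hφmono : StrictMono φ) (hφpos : ∀ t, 0 < φ t) (hφc : Continuous φ)
    (hφ : ∀ t : ℝ, ∫ x in Ioc (0 : ℝ) (φ t), Real.exp (-x) =
      (Real.sqrt Real.pi)⁻¹ * ∫ x in Iic t, Real.exp (-x ^ 2))
    (T : EuclideanSpace ℝ (Fin n) × ℝ → EuclideanSpace ℝ (Fin n) × ℝ)
    (hT : ∀ y, T y = (((n : ℝ) + 1) / n) •
      ∫ u, φ ((inner ℝ y.1 (s u).1 : ℝ) + y.2 * (s u).2) • s u ∂Z)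
    (C : Set (EuclideanSpace ℝ (Fin n) × ℝ))
    (hC : C = {z | 0 < z.2 ∧
      z.1 ∈ (-(z.2 * Real.sqrt n)) • interior (convexHull ℝ (msupp Z))}) :
    ∀ y, T y ∈ C :=
  range_T_subset_cone_general n hn Z hsph hiso hcent s hs φ hφpos hφc T hT C hC
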